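/- Let 𝒢 be a groupoid with 𝒢₀ finite acting partially on a coalgebra C via subcoalgebras {C_g}, coalgebra isomorphisms {θ_g} and projections {P_g}. Then: (i) θ_{r(g)}∘θ_g = θ_g and θ_{r(g)}∘P_g = P_g for all g ∈ 𝒢; (ii) θ_{g⁻¹} = (θ_g)⁻¹ for all g ∈ 𝒢; (iii) P_{g⁻¹}∘θ_h = θ_h∘P_{(gh)⁻¹} as maps on C_{h⁻¹}, whenever gh is defined. -/

import Mathlib

open TensorProduct Coalgebra

/-- A groupoid in the sense of partial action theory: a set with a partially defined
product (`defined g h` expresses that `g h` exists; `mul g h` is the product, with junk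
value otherwise) and inverses, with `d(g) = g⁻¹g`, `r(g) = gg⁻¹`. -/
structure Gpd (G : Type*) where
  defined : G → G → Prop
  mul : G → G → G
  inv : G → G
  defined_mul_inv : ∀ g, defined g (inv g)
  defined_inv_mul : ∀ g, defined (inv g) g
  /-- `∃ gh` iff `d(g) = r(h)` -/
  defined_iff : ∀ g h, defined g h ↔ mul (inv g) g = mul h (inv h)
  mul_assoc' : ∀ g h l, defined g h → defined h l → mul (mul g h) l = mul g (mul h l)
  defined_mul_left : ∀ g h l, defined g h → defined h l → defined (mul g h) l
  defined_mul_right : ∀ g h l, defined g h → defined h l → defined g (mul h l)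
  /-- `g d(g) = g` -/
  mul_d : ∀ g, mul g (mul (inv g) g) = g
  /-- `r(g) g = g` -/
  r_mul : ∀ g, mul (mul g (inv g)) g = g
  inv_inv : ∀ g, inv (inv g) = g

namespace Gpd

variable {G : Type*} (S : Gpd G)

/-- `d(g) = g⁻¹ g`. -/
def d (g : G) : G := S.mul (S.inv g) g

/-- `r(g) = g g⁻¹`. -/
def r (g : G) : G := S.mul g (S.inv g)

/-- `e` is an identity element of the groupoid. -/
def IsIdent (e : G) : Prop := ∃ g : G, e = S.d g

end Gpd

noncomputable section

variable (k : Type*) [Field k]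
variable {G : Type*}
variable (C : Type*) [AddCommGroup C] [Module k C] [Coalgebra k C]

/-- A structure of left partial `k𝒢`-module coalgebra on `C`, described by the family of
linear maps `α_g(c) = δ_g · c` (`E` is the finite set of identity elements of `𝒢`):
`Σ_{e ∈ 𝒢₀} α_e = id` (PMC1); `Δ(δ_g · c) = (δ_g · c₁) ⊗ (δ_g · c₂)` (PMC2); and
`δ_g·(δ_h·c) = (δ_{gh}·c₁) ε(δ_h·c₂)` when `gh` is defined, and `0` otherwise (PMC3). -/
structure IsGpdPartialModuleCoalgebra (S : Gpd G) (E : Finset G)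
    (α : G → (C →ₗ[k] C)) : Prop where
  ident_sum : ∑ e ∈ E, α e = LinearMap.id
  comul_compat : ∀ (g : G) (c : C),
      comul (R := k) (α g c) = TensorProduct.map (α g) (α g) (comul (R := k) c)
  comp_defined : ∀ (g h : G) (c : C), S.defined g h →
      α g (α h c)
        = (TensorProduct.rid k C)
            ((TensorProduct.map (α (S.mul g h)) (counit (R := k) ∘ₗ α h)) (comul (R := k) c))
  comp_undefined : ∀ (g h : G) (c : C), ¬ S.defined g h → α g (α h c) = 0

/-- A *symmetric* left partial `k𝒢`-module coalgebra structure: additionally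
`δ_g·(δ_h·c) = ε(δ_h·c₁) (δ_{gh}·c₂)` when `gh` is defined. -/
structure IsGpdSymmetricPartialModuleCoalgebra (S : Gpd G) (E : Finset G)
    (α : G → (C →ₗ[k] C))
    extends IsGpdPartialModuleCoalgebra k C S E α : Prop where
  comp_defined' : ∀ (g h : G) (c : C), S.defined g h →
      α g (α h c)
        = (TensorProduct.lid k C)
            ((TensorProduct.map (counit (R := k) ∘ₗ α h) (α (S.mul g h))) (comul (R := k) c))

end

noncomputable section

open scoped Classical

variable (k : Type*) [Field k]
variable {G : Type*}
variable (C : Type*) [AddCommGroup C] [Module k C] [Coalgebra k C]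

/-- A partial action of a groupoid `𝒢` on a coalgebra `C`: a family of subcoalgebras
`C_g`, coalgebra isomorphisms `θ_g : C_{g⁻¹} → C_g` (encoded as global linear maps, whose
behaviour only matters on `C_{g⁻¹}`) and linear projections `P_g : C → C` onto `C_g`,
subject to the axioms of Definition "partial groupoid action on a coalgebra". -/
structure GpdCoaction (S : Gpd G) where
  Csub : G → Submodule k C
  θ : G → (C →ₗ[k] C)
  P : G → (C →ₗ[k] C)
  /-- each `C_g` is a subcoalgebra -/
  Csub_subcoalgebra : ∀ g : G, ∀ c ∈ Csub g,
      comul (R := k) c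
        ∈ LinearMap.range (TensorProduct.map (Csub g).subtype (Csub g).subtype)
  P_proj : ∀ g : G, (P g) ∘ₗ (P g) = P g
  P_range : ∀ g : G, LinearMap.range (P g) = Csub g
  /-- `(P_g ⊗ P_g)Δ = Δ P_g` -/
  P_comul : ∀ (g : G) (c : C),
      TensorProduct.map (P g) (P g) (comul (R := k) c) = comul (R := k) (P g c)
  /-- `P_g(c) = P_{r(g)}(c₁) ε(P_g(c₂))` -/
  P_quasi : ∀ (g : G) (c : C),
      P g c = (TensorProduct.rid k C)
          ((TensorProduct.map (P (S.r g)) (counit (R := k) ∘ₗ P g)) (comul (R := k) c))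
  /-- `P_g(c) = P_{r(g)}(c₂) ε(P_g(c₁))` -/
  P_quasi' : ∀ (g : G) (c : C),
      P g c = (TensorProduct.lid k C)
          ((TensorProduct.map (counit (R := k) ∘ₗ P g) (P (S.r g))) (comul (R := k) c))
  /-- `θ_e = id_{C_e}` for identities `e` -/
  θ_ident : ∀ e : G, S.IsIdent e → ∀ c ∈ Csub e, θ e c = c
  /-- `θ_g` maps `C_{g⁻¹}` into `C_g` -/
  θ_maps : ∀ g : G, ∀ c ∈ Csub (S.inv g), θ g c ∈ Csub g
  /-- `θ_g` is injective on `C_{g⁻¹}` -/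
  θ_inj : ∀ g : G, ∀ c ∈ Csub (S.inv g), ∀ c' ∈ Csub (S.inv g), θ g c = θ g c' → c = c'
  /-- `θ_g : C_{g⁻¹} → C_g` is surjective -/
  θ_surj : ∀ g : G, ∀ c ∈ Csub g, ∃ c' ∈ Csub (S.inv g), θ g c' = c
  /-- `θ_g` is comultiplicative on `C_{g⁻¹}` -/
  θ_comul : ∀ g : G, ∀ c ∈ Csub (S.inv g),
      comul (R := k) (θ g c) = TensorProduct.map (θ g) (θ g) (comul (R := k) c)
  /-- `θ_g` is counital on `C_{g⁻¹}` -/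
  θ_counit : ∀ g : G, ∀ c ∈ Csub (S.inv g), counit (R := k) (θ g c) = counit (R := k) c
  /-- the projections commute -/
  P_comm : ∀ g h : G, (P g) ∘ₗ (P h) = (P h) ∘ₗ (P g)
  /-- `θ_{h⁻¹} ∘ P_h ∘ P_{g⁻¹} = P_{(gh)⁻¹} ∘ θ_{h⁻¹} ∘ P_h` when `gh` is defined -/
  compat₂ : ∀ g h : G, S.defined g h →
      (θ (S.inv h)) ∘ₗ (P h) ∘ₗ (P (S.inv g))
        = (P (S.inv (S.mul g h))) ∘ₗ (θ (S.inv h)) ∘ₗ (P h)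
  /-- `θ_g ∘ θ_h ∘ P_{(gh)⁻¹} ∘ P_{h⁻¹} = θ_{gh} ∘ P_{(gh)⁻¹} ∘ P_{h⁻¹}` when `gh` is defined -/
  compat₃ : ∀ g h : G, S.defined g h →
      (θ g) ∘ₗ (θ h) ∘ₗ (P (S.inv (S.mul g h))) ∘ₗ (P (S.inv h))
        = (θ (S.mul g h)) ∘ₗ (P (S.inv (S.mul g h))) ∘ₗ (P (S.inv h))

end

/-! The quasi-projection axiom `P_g(c) = P_{r(g)}(c₁) ε(P_g(c₂))` gives `C_g ⊆ C_{r(g)}`, on which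
`θ_{r(g)}` is the identity; this is (i). Since `d(g) = r(g⁻¹)` is its own inverse and
`C_{g⁻¹} ⊆ C_{d(g)}`, the composition axiom for the pair `(g⁻¹, g)` collapses to
`θ_{g⁻¹} θ_g = θ_{d(g)} = id` on `C_{g⁻¹}`, which is (ii). For (iii), apply the axiom
`θ_{h⁻¹} P_h P_{g⁻¹} = P_{(gh)⁻¹} θ_{h⁻¹} P_h` to `θ_h c` and undo `θ_{h⁻¹}` using (ii). -/

namespace Gpd

variable {G : Type*} (S : Gpd G)

lemma r_d (g : G) : S.r (S.d g) = S.d g :=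
  ((S.defined_iff g (S.d g)).mp
    (S.defined_mul_right g (S.inv g) g (S.defined_mul_inv g) (S.defined_inv_mul g))).symm

lemma d_d (g : G) : S.d (S.d g) = S.d g := by
  have hdef : S.defined (S.r (S.d g)) (S.d g) :=
    S.defined_mul_left _ _ _ (S.defined_mul_inv _) (S.defined_inv_mul _)
  rw [S.r_d] at hdef
  exact ((S.defined_iff _ _).mp hdef).trans (S.r_d g)

lemma inv_d (g : G) : S.inv (S.d g) = S.d g := by
  have h := S.mul_d (S.inv (S.d g))
  rw [S.inv_inv] at h
  change S.mul (S.inv (S.d g)) (S.r (S.d g)) = _ at h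
  rw [S.r_d] at h
  exact h.symm.trans (S.d_d g)

lemma r_inv (g : G) : S.r (S.inv g) = S.d g := by
  rw [r, S.inv_inv, d]

lemma isIdent_d (g : G) : S.IsIdent (S.d g) := ⟨g, rfl⟩

lemma isIdent_r (g : G) : S.IsIdent (S.r g) := ⟨S.inv g, by rw [d, S.inv_inv, r]⟩

end Gpd

namespace GpdCoaction

variable {k : Type*} [Field k] {G : Type*} {C : Type*}
  [AddCommGroup C] [Module k C] [Coalgebra k C] {S : Gpd G} (A : GpdCoaction k C S)

lemma P_apply_mem (g : G) (c : C) : A.P g c ∈ A.Csub g :=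
  A.P_range g ▸ LinearMap.mem_range_self _ c

lemma P_apply_of_mem {g : G} {c : C} (hc : c ∈ A.Csub g) : A.P g c = c := by
  rw [← A.P_range] at hc
  obtain ⟨y, rfl⟩ := hc
  exact LinearMap.congr_fun (A.P_proj g) y

lemma P_apply_mem_Csub_r (g : G) (c : C) : A.P g c ∈ A.Csub (S.r g) := by
  have hfactor : (TensorProduct.rid k C).toLinearMap ∘ₗ
        TensorProduct.map (A.P (S.r g)) (counit (R := k) ∘ₗ A.P g)
      = A.P (S.r g) ∘ₗ (TensorProduct.rid k C).toLinearMap ∘ₗ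
        (counit (R := k) ∘ₗ A.P g).lTensor C :=
    TensorProduct.ext' fun a b => by simp
  have h := LinearMap.congr_fun hfactor (comul (R := k) c)
  rw [LinearMap.comp_apply, LinearEquiv.coe_coe] at h
  rw [A.P_quasi g c, h]
  exact A.P_apply_mem _ _

lemma Csub_le_Csub_r (g : G) : A.Csub g ≤ A.Csub (S.r g) := fun c hc =>
  A.P_apply_of_mem hc ▸ A.P_apply_mem_Csub_r g c

lemma θ_r_apply_of_mem {g : G} {c : C} (hc : c ∈ A.Csub g) : A.θ (S.r g) c = c :=
  A.θ_ident _ (S.isIdent_r g) c (A.Csub_le_Csub_r g hc)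

lemma θ_inv_θ (g : G) {c : C} (hc : c ∈ A.Csub (S.inv g)) :
    A.θ (S.inv g) (A.θ g c) = c := by
  have hcd : c ∈ A.Csub (S.d g) := S.r_inv g ▸ A.Csub_le_Csub_r _ hc
  have h := LinearMap.congr_fun (A.compat₃ (S.inv g) g (S.defined_inv_mul g)) c
  change A.θ (S.inv g) (A.θ g (A.P (S.inv (S.d g)) (A.P (S.inv g) c)))
    = A.θ (S.d g) (A.P (S.inv (S.d g)) (A.P (S.inv g) c)) at h
  rwa [S.inv_d, A.P_apply_of_mem hc, A.P_apply_of_mem hcd,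
    A.θ_ident _ (S.isIdent_d g) c hcd] at h

lemma θ_θ_inv (g : G) {c : C} (hc : c ∈ A.Csub g) : A.θ g (A.θ (S.inv g) c) = c := by
  simpa only [S.inv_inv] using A.θ_inv_θ (S.inv g) (c := c) (by rwa [S.inv_inv])

lemma P_inv_θ (g h : G) (hgh : S.defined g h) {c : C} (hc : c ∈ A.Csub (S.inv h)) :
    A.P (S.inv g) (A.θ h c) = A.θ h (A.P (S.inv (S.mul g h)) c) := by
  have hθc : A.θ h c ∈ A.Csub h := A.θ_maps h c hc
  have hcompat := LinearMap.congr_fun (A.compat₂ g h hgh) (A.θ h c)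
  simp only [LinearMap.comp_apply] at hcompat
  rw [A.P_apply_of_mem hθc, A.θ_inv_θ h hc] at hcompat
  have hPθc : A.P h (A.P (S.inv g) (A.θ h c)) = A.P (S.inv g) (A.θ h c) := by
    rw [← LinearMap.comp_apply, A.P_comm, LinearMap.comp_apply, A.P_apply_of_mem hθc]
  rw [← hcompat, A.θ_θ_inv h (A.P_apply_mem h _), hPθc]

end GpdCoaction

theorem gpd_coaction_properties
    (k : Type*) [Field k] {G : Type*}
    (C : Type*) [AddCommGroup C] [Module k C] [Coalgebra k C]
    (S : Gpd G)
    (A : GpdCoaction k C S) :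
    (∀ g : G, (∀ c ∈ A.Csub (S.inv g), A.θ (S.r g) (A.θ g c) = A.θ g c) ∧
       (∀ c : C, A.θ (S.r g) (A.P g c) = A.P g c)) ∧
    (∀ g : G, (∀ c ∈ A.Csub (S.inv g), A.θ (S.inv g) (A.θ g c) = c) ∧
       (∀ c ∈ A.Csub g, A.θ g (A.θ (S.inv g) c) = c)) ∧
    (∀ g h : G, S.defined g h →
       ∀ c ∈ A.Csub (S.inv h),
         A.P (S.inv g) (A.θ h c) = A.θ h (A.P (S.inv (S.mul g h)) c)) :=
  ⟨fun g => ⟨fun c hc => A.θ_r_apply_of_mem (A.θ_maps g c hc),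
      fun c => A.θ_r_apply_of_mem (A.P_apply_mem g c)⟩,
    fun g => ⟨fun _ => A.θ_inv_θ g, fun _ => A.θ_θ_inv g⟩,
    fun g h hgh _ => A.P_inv_θ g h hgh⟩
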